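/- arXiv:2504.17605 — 2 statements merged into one kernel-verified Lean document; each statement's English description precedes it below -/
import Mathlib

section
/- Let M be a row stochastic n×n matrix with entries in [0,1] that is strongly connected (its associated directed graph, with an edge j→i whenever M_{i,j} > 0, is strongly connected) and aperiodic (the gcd of cycle lengths in this graph is 1). Then lim_{t→∞} M^t exists and all its rows are equal. Consequently, for any initial opinion vector B, the DeGroot dynamics B^{t+1} = MB^t converges to a consensus: all entries of lim_{t→∞} M^t B are equal. -/
open Matrix Filter

/-- The directed influence graph of `M` (edge `j → i` iff `M i j > 0`) is strongly
connected: for all `i, j` there is a walk from `j` to `i`, i.e. some power of `M`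
has a positive `(i,j)` entry. -/
def StronglyConnected {n : ℕ} (M : Matrix (Fin n) (Fin n) ℝ) : Prop :=
  ∀ i j : Fin n, ∃ k : ℕ, 0 < (M ^ k) i j

/-- `M` is aperiodic: the gcd of the lengths of the cycles of its directed graph
is `1` (a closed walk of length `k` at `i` exists iff `(M^k) i i > 0`). -/
def Aperiodic {n : ℕ} (M : Matrix (Fin n) (Fin n) ℝ) : Prop :=
  ∀ d : ℕ, (∀ k : ℕ, 0 < k → (∃ i : Fin n, 0 < (M ^ k) i i) → d ∣ k) → d = 1

/-!
Strong connectivity and aperiodicity make the set of return times `{k | 0 < (M ^ k) i i}` of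
each state an additive submonoid of `ℕ` with gcd `1`, which therefore contains every large
integer; splicing such returns onto connecting walks gives a power `M ^ m` with all entries
at least some `ε > 0`. Under a row-stochastic matrix the maximum of a vector does not increase
and its minimum does not decrease, and under `M ^ m` the spread `max - min` shrinks by the
factor `1 - ε`. So the maximum and minimum of `M ^ t *ᵥ v` converge to a common value, the
consensus; taking `v` a standard basis vector shows that every column of `M ^ t` tends to a
constant column.
-/

open Topology

theorem Nat.exists_forall_ge_mem_of_setGcd_eq_one {S : Set ℕ} (h0 : 0 ∈ S)
    (hadd : ∀ a ∈ S, ∀ b ∈ S, a + b ∈ S) (hS : setGcd S = 1) : ∃ N, ∀ m ≥ N, m ∈ S := by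
  obtain ⟨N, hN⟩ := exists_mem_closure_of_ge S
  exact ⟨N, fun m hm => AddSubmonoid.closure_induction (fun _ hx => hx) h0
    (fun x y _ _ hx hy => hadd x hx y hy) (hN m hm (hS ▸ one_dvd m))⟩

theorem tendsto_zero_of_antitone_of_le_mul {g : ℕ → ℝ} (hg : Antitone g) (hg0 : ∀ t, 0 ≤ g t)
    {m : ℕ} (hm : 0 < m) {ρ : ℝ} (hρ0 : 0 ≤ ρ) (hρ1 : ρ < 1)
    (hstep : ∀ t, g (m + t) ≤ ρ * g t) : Tendsto g atTop (𝓝 0) := by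
  have hgeom : ∀ q, g (m * q) ≤ ρ ^ q * g 0 := by
    intro q
    induction q with
    | zero => simp
    | succ q ih =>
      calc g (m * (q + 1)) = g (m + m * q) := by ring_nf
        _ ≤ ρ * g (m * q) := hstep _
        _ ≤ ρ * (ρ ^ q * g 0) := by gcongr
        _ = ρ ^ (q + 1) * g 0 := by ring
  have hpow : Tendsto (fun t => ρ ^ (t / m) * g 0) atTop (𝓝 0) := by
    simpa using ((tendsto_pow_atTop_nhds_zero_of_lt_one hρ0 hρ1).comp
      (Nat.tendsto_div_const_atTop hm.ne')).mul_const (g 0)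
  exact squeeze_zero hg0 (fun t => (hg (Nat.mul_div_le t m)).trans (hgeom (t / m))) hpow

theorem exists_tendsto_const_of_squeeze {ι : Type*} [Nonempty ι] {u : ℕ → ι → ℝ}
    {lo hi : ℕ → ℝ} (hlo : Monotone lo) (hhi : Antitone hi) (hlo_le : ∀ t i, lo t ≤ u t i)
    (hle_hi : ∀ t i, u t i ≤ hi t) (hgap : Tendsto (fun t => hi t - lo t) atTop (𝓝 0)) :
    ∃ c : ℝ, Tendsto u atTop (𝓝 fun _ => c) := by
  obtain ⟨i₀⟩ := ‹Nonempty ι›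
  have hbdd : BddBelow (Set.range hi) := ⟨lo 0, by
    rintro _ ⟨t, rfl⟩
    exact (hlo (Nat.zero_le t)).trans ((hlo_le t i₀).trans (hle_hi t i₀))⟩
  have hhi_lim := tendsto_atTop_ciInf hhi hbdd
  have hlo_lim : Tendsto lo atTop (𝓝 (⨅ t, hi t)) := by simpa using hhi_lim.sub hgap
  exact ⟨_, tendsto_pi_nhds.2 fun i => tendsto_of_tendsto_of_tendsto_of_le_of_le hlo_lim hhi_lim
    (fun t => hlo_le t i) fun t => hle_hi t i⟩

namespace Matrix

variable {ι : Type*} [Fintype ι] [DecidableEq ι]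

theorem pow_add_apply_pos {R : Type*} [Semiring R] [PartialOrder R] [IsStrictOrderedRing R]
    {A : Matrix ι ι R} (hA : ∀ i j, 0 ≤ A i j) {a b : ℕ} {i k j : ι} (ha : 0 < (A ^ a) i k)
    (hb : 0 < (A ^ b) k j) : 0 < (A ^ (a + b)) i j := by
  rw [pow_add, mul_apply]
  exact (mul_pos ha hb).trans_le <| Finset.single_le_sum
    (fun l _ => mul_nonneg (pow_apply_nonneg hA a i l) (pow_apply_nonneg hA b l j))
    (Finset.mem_univ k)

section Contraction

variable {P : Matrix ι ι ℝ} {ε : ℝ}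

theorem mulVec_apply_le_sub_mul (hP : P ∈ rowStochastic ℝ ι) (hε : 0 ≤ ε) {i : ι}
    (hPε : ∀ k, ε ≤ P i k) {v : ι → ℝ} {a b : ℝ} {k₀ : ι} (hb : ∀ k, v k ≤ b) (ha : v k₀ ≤ a) :
    (P *ᵥ v) i ≤ b - ε * (b - a) := by
  have hgap : b - (P *ᵥ v) i = ∑ k, P i k * (b - v k) := by
    simp only [mulVec, dotProduct, mul_sub, Finset.sum_sub_distrib, ← Finset.sum_mul,
      sum_row_of_mem_rowStochastic hP, one_mul]
  have : ε * (b - a) ≤ b - (P *ᵥ v) i :=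
    calc ε * (b - a) ≤ ε * (b - v k₀) := by gcongr
      _ ≤ P i k₀ * (b - v k₀) := mul_le_mul_of_nonneg_right (hPε k₀) (sub_nonneg.2 (hb k₀))
      _ ≤ ∑ k, P i k * (b - v k) := Finset.single_le_sum (f := fun k => P i k * (b - v k))
          (fun k _ => mul_nonneg (nonneg_of_mem_rowStochastic hP) (sub_nonneg.2 (hb k)))
          (Finset.mem_univ k₀)
      _ = b - (P *ᵥ v) i := hgap.symm
  linarith

variable [Nonempty ι]

theorem iSup_mulVec_le (hP : P ∈ rowStochastic ℝ ι) (hε : 0 ≤ ε) (hPε : ∀ i k, ε ≤ P i k)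
    (v : ι → ℝ) : ⨆ i, (P *ᵥ v) i ≤ (⨆ k, v k) - ε * ((⨆ k, v k) - ⨅ k, v k) := by
  obtain ⟨k₀, hk₀⟩ := exists_eq_ciInf_of_finite (f := v)
  exact ciSup_le fun i => mulVec_apply_le_sub_mul hP hε (hPε i) (Finite.le_ciSup v) hk₀.le

theorem le_iInf_mulVec (hP : P ∈ rowStochastic ℝ ι) (hε : 0 ≤ ε) (hPε : ∀ i k, ε ≤ P i k)
    (v : ι → ℝ) : (⨅ k, v k) + ε * ((⨆ k, v k) - ⨅ k, v k) ≤ ⨅ i, (P *ᵥ v) i := by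
  obtain ⟨k₀, hk₀⟩ := exists_eq_ciSup_of_finite (f := v)
  refine le_ciInf fun i => ?_
  have := mulVec_apply_le_sub_mul hP hε (hPε i) (v := -v) (k₀ := k₀)
    (fun k => neg_le_neg (Finite.ciInf_le v k)) (neg_le_neg hk₀.ge)
  rw [mulVec_neg, Pi.neg_apply] at this
  linarith

end Contraction

theorem IsPrimitive.exists_tendsto_pow_mulVec [Nonempty ι] {M : Matrix ι ι ℝ}
    (hM : M ∈ rowStochastic ℝ ι) (hprim : M.IsPrimitive) (v : ι → ℝ) :
    ∃ c : ℝ, Tendsto (fun t => M ^ t *ᵥ v) atTop (𝓝 fun _ => c) := by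
  obtain ⟨m, hm, hpos⟩ := hprim.exists_pos_pow
  obtain ⟨⟨i₀, j₀⟩, hmin⟩ := Finite.exists_min fun p : ι × ι => (M ^ m) p.1 p.2
  set ε := (M ^ m) i₀ j₀
  have hε1 : ε ≤ 1 := le_one_of_mem_rowStochastic (pow_mem hM m)
  have hnonneg : ∀ i k, 0 ≤ M i k := fun _ _ => nonneg_of_mem_rowStochastic hM
  set u := fun t => M ^ t *ᵥ v
  have hu : ∀ s t, u (s + t) = M ^ s *ᵥ u t := fun s t => by
    simp only [u, pow_add, mulVec_mulVec]
  have hu_succ : ∀ t, u (t + 1) = M *ᵥ u t := fun t => by rw [add_comm, hu, pow_one]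
  set lo := fun t => ⨅ i, u t i
  set hi := fun t => ⨆ i, u t i
  have hlo : Monotone lo := monotone_nat_of_le_succ fun t => by
    simpa [lo, hu_succ] using le_iInf_mulVec hM le_rfl hnonneg (u t)
  have hhi : Antitone hi := antitone_nat_of_succ_le fun t => by
    simpa [hi, hu_succ] using iSup_mulVec_le hM le_rfl hnonneg (u t)
  have hspread : ∀ t, hi (m + t) - lo (m + t) ≤ (1 - ε) * (hi t - lo t) := fun t => by
    have hsup := iSup_mulVec_le (pow_mem hM m) (hpos i₀ j₀).le (fun i k => hmin (i, k)) (u t)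
    have hinf := le_iInf_mulVec (pow_mem hM m) le_rfl
      (fun _ _ => nonneg_of_mem_rowStochastic (pow_mem hM m)) (u t)
    simp only [hi, lo, hu m t]
    linarith
  have hgap : Tendsto (fun t => hi t - lo t) atTop (𝓝 0) :=
    tendsto_zero_of_antitone_of_le_mul (fun _ _ hst => sub_le_sub (hhi hst) (hlo hst))
      (fun t => sub_nonneg.2 ((Finite.ciInf_le (u t) i₀).trans (Finite.le_ciSup (u t) i₀))) hm
      (sub_nonneg.2 hε1) (sub_lt_self 1 (hpos i₀ j₀)) hspread
  exact exists_tendsto_const_of_squeeze hlo hhi (fun t => Finite.ciInf_le (u t))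
    (fun t => Finite.le_ciSup (u t)) hgap

theorem IsPrimitive.exists_tendsto_pow {M : Matrix ι ι ℝ} (hM : M ∈ rowStochastic ℝ ι)
    (hprim : M.IsPrimitive) :
    ∃ ℓ : ι → ℝ, Tendsto (fun t => M ^ t) atTop (𝓝 (of fun _ j => ℓ j)) := by
  have hcol : ∀ j, ∃ c : ℝ, Tendsto (fun t => M ^ t *ᵥ Pi.single j 1) atTop (𝓝 fun _ => c) :=
    fun j => haveI : Nonempty ι := ⟨j⟩; hprim.exists_tendsto_pow_mulVec hM _
  choose ℓ hℓ using hcol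
  refine ⟨ℓ, tendsto_pi_nhds.2 fun i => tendsto_pi_nhds.2 fun j => ?_⟩
  simpa [mulVec_single_one] using tendsto_pi_nhds.1 (hℓ j) i

end Matrix

section Digraph

variable {n : ℕ} {M : Matrix (Fin n) (Fin n) ℝ}

theorem Aperiodic.setGcd_eq_one (hM : ∀ i j, 0 ≤ M i j) (hconn : StronglyConnected M)
    (haper : Aperiodic M) (i₀ : Fin n) : Nat.setGcd {k | 0 < (M ^ k) i₀ i₀} = 1 := by
  refine haper _ fun k _ ⟨i, hi⟩ => ?_
  obtain ⟨a, ha⟩ := hconn i₀ i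
  obtain ⟨b, hb⟩ := hconn i i₀
  have hab := Nat.setGcd_dvd_of_mem (s := {k | 0 < (M ^ k) i₀ i₀}) (pow_add_apply_pos hM ha hb)
  have hakb := Nat.setGcd_dvd_of_mem (s := {k | 0 < (M ^ k) i₀ i₀})
    (pow_add_apply_pos hM (pow_add_apply_pos hM ha hi) hb)
  rw [add_right_comm] at hakb
  exact (Nat.dvd_add_right hab).1 hakb

theorem Aperiodic.exists_forall_ge_pow_apply_self_pos (hM : ∀ i j, 0 ≤ M i j)
    (hconn : StronglyConnected M) (haper : Aperiodic M) (i₀ : Fin n) :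
    ∃ N, ∀ k ≥ N, 0 < (M ^ k) i₀ i₀ :=
  Nat.exists_forall_ge_mem_of_setGcd_eq_one (S := {k | 0 < (M ^ k) i₀ i₀}) (by simp)
    (fun _ ha _ hb => pow_add_apply_pos hM ha hb) (haper.setGcd_eq_one hM hconn i₀)

theorem Aperiodic.isPrimitive (hM : ∀ i j, 0 ≤ M i j) (hconn : StronglyConnected M)
    (haper : Aperiodic M) : M.IsPrimitive := by
  choose N hN using haper.exists_forall_ge_pow_apply_self_pos hM hconn
  choose K hK using hconn
  set m := (Finset.univ.sup fun p : Fin n × Fin n => K p.1 p.2) + Finset.univ.sup N + 1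
  refine ⟨hM, m, by omega, fun i j => ?_⟩
  have hK_le : K i j ≤ Finset.univ.sup fun p : Fin n × Fin n => K p.1 p.2 :=
    Finset.le_sup (f := fun p : Fin n × Fin n => K p.1 p.2) (Finset.mem_univ (i, j))
  have hN_le : N j ≤ Finset.univ.sup N := Finset.le_sup (Finset.mem_univ j)
  -- a walk `i → j` of length `K i j`, then a closed walk at `j` of length `m - K i j ≥ N j`
  have := pow_add_apply_pos hM (hK i j) (hN j (m - K i j) (by omega))
  rwa [Nat.add_sub_cancel' (by omega)] at this

end Digraph

/-- DeGroot consensus theorem: a row-stochastic, strongly connected, aperiodic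
matrix has a limit `L = lim M^t` all whose rows are equal; hence the DeGroot
dynamics `B^{t+1} = M B^t` converges to a consensus for every initial opinion. -/
theorem degroot_consensus {n : ℕ}
    (M : Matrix (Fin n) (Fin n) ℝ)
    (hrange : ∀ i j, M i j ∈ Set.Icc (0 : ℝ) 1)
    (hstoch : ∀ i, ∑ j, M i j = 1)
    (hconn : StronglyConnected M)
    (haper : Aperiodic M) :
    ∃ L : Matrix (Fin n) (Fin n) ℝ,
      Tendsto (fun t : ℕ => M ^ t) atTop (nhds L) ∧
      (∀ i i' j, L i j = L i' j) ∧
      ∀ B : Fin n → ℝ, ∀ i i', L.mulVec B i = L.mulVec B i' := by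
  have hM : M ∈ rowStochastic ℝ (Fin n) :=
    mem_rowStochastic_iff_sum.2 ⟨fun i j => (hrange i j).1, hstoch⟩
  obtain ⟨ℓ, hℓ⟩ := (haper.isPrimitive (fun i j => (hrange i j).1) hconn).exists_tendsto_pow hM
  exact ⟨of fun _ j => ℓ j, hℓ, fun _ _ _ => rfl, fun _ _ _ => rfl⟩
end

section
/- Consider a constraint opinion model over ℝ≥0 with one variable p of finite domain D and an influence matrix M of (possibly non-constant) constraints. If for every d ∈ D the real matrix M{p↦d} obtained by evaluating each entry of M at the valuation p↦d is row stochastic, strongly connected, and aperiodic, then lim_{t→∞} M^t exists (as a matrix of constraints) and all its rows are equal. -/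
open Matrix Filter

/-!
Fix `d`; everything happens for the single nonnegative row-stochastic matrix `A = M{p↦d}`.
Strong connectivity and aperiodicity make `A` primitive: the lengths of closed walks at a state
form an additive submonoid of `ℕ` with gcd `1`, hence contain every large integer, and so some
power `A ^ K` has all entries `≥ ε > 0`. Such a stochastic matrix shrinks the spread `max - min`
of every real vector by the factor `1 - ε`, while the minimum can only increase. Therefore every
column of `A ^ t` converges to a constant vector, which is the consensus.
-/

noncomputable def spread {ι : Type*} (x : ι → ℝ) : ℝ := (⨆ i, x i) - ⨅ i, x i

theorem spread_nonneg {ι : Type*} [Finite ι] [Nonempty ι] (x : ι → ℝ) : 0 ≤ spread x :=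
  sub_nonneg.2 <| (ciInf_le (Finite.bddBelow_range x) (Classical.arbitrary ι)).trans
    (le_ciSup (Finite.bddAbove_range x) _)

namespace Matrix

variable {ι : Type*} [Fintype ι] [DecidableEq ι]

section Primitivity

variable {A : Matrix ι ι NNReal}

theorem pow_add_apply_pos_s11 {a b : ℕ} {i k j : ι} (h₁ : 0 < (A ^ a) i k) (h₂ : 0 < (A ^ b) k j) :
    0 < (A ^ (a + b)) i j := by
  rw [pow_add, mul_apply]
  exact (mul_pos h₁ h₂).trans_le <| Finset.single_le_sum
    (f := fun l => (A ^ a) i l * (A ^ b) l j) (fun _ _ => zero_le) (Finset.mem_univ k)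

def returnTimes (A : Matrix ι ι NNReal) (i : ι) : AddSubmonoid ℕ where
  carrier := {k | 0 < (A ^ k) i i}
  add_mem' := pow_add_apply_pos_s11
  zero_mem' := by simp

variable (hconn : ∀ i j, ∃ k : ℕ, 0 < (A ^ k) i j)
  (haper : ∀ e : ℕ, (∀ k : ℕ, 0 < k → (∃ i, 0 < (A ^ k) i i) → e ∣ k) → e = 1)
include hconn haper

theorem setGcd_returnTimes_eq_one (i : ι) : Nat.setGcd (returnTimes A i) = 1 := by
  refine haper _ fun k _ ⟨j, hj⟩ => ?_
  obtain ⟨a, ha⟩ := hconn i j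
  obtain ⟨b, hb⟩ := hconn j i
  have hab : a + b ∈ returnTimes A i := pow_add_apply_pos_s11 ha hb
  have habk : a + k + b ∈ returnTimes A i := pow_add_apply_pos_s11 (pow_add_apply_pos_s11 ha hj) hb
  rw [add_right_comm] at habk
  exact (Nat.dvd_add_right (Nat.setGcd_dvd_of_mem hab)).mp (Nat.setGcd_dvd_of_mem habk)

theorem eventually_pow_apply_self_pos (i : ι) : ∀ᶠ k in atTop, 0 < (A ^ k) i i := by
  obtain ⟨N, hN⟩ := Nat.exists_mem_closure_of_ge (returnTimes A i : Set ℕ)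
  rw [AddSubmonoid.closure_eq, setGcd_returnTimes_eq_one hconn haper] at hN
  exact eventually_atTop.2 ⟨N, fun k hk => hN k hk (one_dvd k)⟩

theorem eventually_pow_pos : ∀ᶠ k in atTop, ∀ i j, 0 < (A ^ k) i j := by
  simp only [eventually_all]
  intro i j
  obtain ⟨q, hq⟩ := hconn i j
  filter_upwards [(tendsto_sub_atTop_nat q).eventually
    (eventually_pow_apply_self_pos hconn haper i), eventually_ge_atTop q] with k hk hqk
  simpa [Nat.sub_add_cancel hqk] using pow_add_apply_pos_s11 hk hq

end Primitivity

section Consensus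

variable {S : Matrix ι ι ℝ}

theorem iInf_le_mulVec_apply (hS : S ∈ rowStochastic ℝ ι) (x : ι → ℝ) (i : ι) :
    ⨅ l, x l ≤ (S *ᵥ x) i :=
  calc ⨅ l, x l = ∑ l, S i l * ⨅ l, x l := by
        rw [← Finset.sum_mul, sum_row_of_mem_rowStochastic hS, one_mul]
    _ ≤ (S *ᵥ x) i := Finset.sum_le_sum fun l _ => mul_le_mul_of_nonneg_left
        (ciInf_le (Finite.bddBelow_range x) l) (nonneg_of_mem_rowStochastic hS)

theorem mulVec_apply_le_iSup (hS : S ∈ rowStochastic ℝ ι) (x : ι → ℝ) (i : ι) :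
    (S *ᵥ x) i ≤ ⨆ l, x l :=
  calc (S *ᵥ x) i ≤ ∑ l, S i l * ⨆ l, x l := Finset.sum_le_sum fun l _ =>
        mul_le_mul_of_nonneg_left (le_ciSup (Finite.bddAbove_range x) l)
          (nonneg_of_mem_rowStochastic hS)
    _ = ⨆ l, x l := by rw [← Finset.sum_mul, sum_row_of_mem_rowStochastic hS, one_mul]

variable [Nonempty ι]

theorem mulVec_apply_le_iSup_sub_mul_spread (hS : S ∈ rowStochastic ℝ ι) {ε : ℝ}
    (hε : ∀ i l, ε ≤ S i l) (x : ι → ℝ) (i : ι) :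
    (S *ᵥ x) i ≤ (⨆ l, x l) - ε * spread x := by
  obtain ⟨l₀, hl₀⟩ := exists_eq_ciInf_of_finite (f := x)
  set m := ⨆ l, x l
  have hle : ∀ l, 0 ≤ m - x l := fun l => sub_nonneg.2 (le_ciSup (Finite.bddAbove_range x) l)
  calc (S *ᵥ x) i = m - ∑ l, S i l * (m - x l) := by
        simp only [mul_sub, Finset.sum_sub_distrib, ← Finset.sum_mul,
          sum_row_of_mem_rowStochastic hS, one_mul, sub_sub_cancel, mulVec, dotProduct]
    _ ≤ m - S i l₀ * (m - x l₀) := sub_le_sub_left (Finset.single_le_sum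
        (fun l _ => mul_nonneg (nonneg_of_mem_rowStochastic hS) (hle l)) (Finset.mem_univ l₀)) m
    _ ≤ m - ε * spread x := by
        rw [spread, ← hl₀]
        exact sub_le_sub_left (mul_le_mul_of_nonneg_right (hε i l₀) (hle l₀)) m

theorem spread_mulVec_le (hS : S ∈ rowStochastic ℝ ι) {ε : ℝ} (hε : ∀ i l, ε ≤ S i l)
    (x : ι → ℝ) : spread (S *ᵥ x) ≤ (1 - ε) * spread x :=
  calc spread (S *ᵥ x) ≤ ((⨆ l, x l) - ε * spread x) - ⨅ l, x l :=
        sub_le_sub (ciSup_le (mulVec_apply_le_iSup_sub_mul_spread hS hε x))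
          (le_ciInf (iInf_le_mulVec_apply hS x))
    _ = (1 - ε) * spread x := by rw [spread]; ring

theorem spread_pow_mulVec_le (hS : S ∈ rowStochastic ℝ ι) {ε : ℝ} (hε : ∀ i l, ε ≤ S i l)
    (x : ι → ℝ) (m : ℕ) : spread (S ^ m *ᵥ x) ≤ (1 - ε) ^ m * spread x := by
  obtain ⟨i⟩ := ‹Nonempty ι›
  have h1ε : 0 ≤ 1 - ε := sub_nonneg.2 ((hε i i).trans (le_one_of_mem_rowStochastic hS))
  induction m with
  | zero => simp
  | succ m ih =>
    calc spread (S ^ (m + 1) *ᵥ x) = spread (S *ᵥ S ^ m *ᵥ x) := by rw [pow_succ', mulVec_mulVec]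
      _ ≤ (1 - ε) * spread (S ^ m *ᵥ x) := spread_mulVec_le hS hε _
      _ ≤ (1 - ε) * ((1 - ε) ^ m * spread x) := mul_le_mul_of_nonneg_left ih h1ε
      _ = (1 - ε) ^ (m + 1) * spread x := by ring

variable {A : Matrix ι ι ℝ} (hA : A ∈ rowStochastic ℝ ι) {K : ℕ} (hK : 0 < K)
  (hpos : ∀ i j, 0 < (A ^ K) i j)
include hA hK hpos

theorem tendsto_spread_pow_mulVec (x : ι → ℝ) :
    Tendsto (fun t => spread (A ^ t *ᵥ x)) atTop (nhds 0) := by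
  obtain ⟨⟨i₀, j₀⟩, hmin⟩ := Finite.exists_min fun p : ι × ι => (A ^ K) p.1 p.2
  set ε := (A ^ K) i₀ j₀
  have hbound : ∀ t, spread (A ^ t *ᵥ x) ≤ (1 - ε) ^ (t / K) * spread x := fun t =>
    calc spread (A ^ t *ᵥ x) = spread (A ^ (t % K) *ᵥ (A ^ K) ^ (t / K) *ᵥ x) := by
          rw [mulVec_mulVec, ← pow_mul, ← pow_add, Nat.mod_add_div]
      _ ≤ (1 - 0) * spread ((A ^ K) ^ (t / K) *ᵥ x) := spread_mulVec_le (pow_mem hA _)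
          (fun _ _ => nonneg_of_mem_rowStochastic (pow_mem hA _)) _
      _ ≤ (1 - ε) ^ (t / K) * spread x := by
          rw [sub_zero, one_mul]
          exact spread_pow_mulVec_le (pow_mem hA K) (fun i j => hmin (i, j)) x _
  have hε₀ : 0 ≤ 1 - ε := sub_nonneg.2 (le_one_of_mem_rowStochastic (pow_mem hA K))
  have hε₁ : 1 - ε < 1 := sub_lt_self 1 (hpos i₀ j₀)
  refine squeeze_zero (fun t => spread_nonneg _) hbound ?_
  simpa using ((tendsto_pow_atTop_nhds_zero_of_lt_one hε₀ hε₁).comp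
    (Nat.tendsto_div_const_atTop hK.ne')).mul_const (spread x)

theorem exists_tendsto_pow_mulVec_const (x : ι → ℝ) :
    ∃ c : ℝ, Tendsto (fun t => A ^ t *ᵥ x) atTop (nhds fun _ => c) := by
  set lo : ℕ → ℝ := fun t => ⨅ i, (A ^ t *ᵥ x) i
  have hmono : Monotone lo := monotone_nat_of_le_succ fun t => le_ciInf fun i => by
    rw [pow_succ', ← mulVec_mulVec]
    exact iInf_le_mulVec_apply hA _ i
  have hbdd : BddAbove (Set.range lo) := ⟨⨆ i, x i, by
    rintro _ ⟨t, rfl⟩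
    exact (ciInf_le (Finite.bddBelow_range _) (Classical.arbitrary ι)).trans
      (mulVec_apply_le_iSup (pow_mem hA t) x _)⟩
  have hlo := tendsto_atTop_ciSup hmono hbdd
  have hhi : Tendsto (fun t => lo t + spread (A ^ t *ᵥ x)) atTop (nhds (⨆ t, lo t)) := by
    simpa using hlo.add (tendsto_spread_pow_mulVec hA hK hpos x)
  refine ⟨⨆ t, lo t, tendsto_pi_nhds.2 fun i => ?_⟩
  refine tendsto_of_tendsto_of_tendsto_of_le_of_le hlo hhi
    (fun t => ciInf_le (Finite.bddBelow_range _) i) (fun t => ?_)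
  simpa [lo, spread] using le_ciSup (Finite.bddAbove_range (A ^ t *ᵥ x)) i

end Consensus

theorem exists_tendsto_pow_of_pow_pos {A : Matrix ι ι NNReal} (hA : ∀ i, ∑ j, A i j = 1)
    {K : ℕ} (hK : 0 < K) (hpos : ∀ i j, 0 < (A ^ K) i j) :
    ∃ L : Matrix ι ι NNReal, Tendsto (fun t => A ^ t) atTop (nhds L) ∧
      ∀ i i' j, L i j = L i' j := by
  set B : Matrix ι ι ℝ := A.map NNReal.toRealHom
  have hB : B ∈ rowStochastic ℝ ι := mem_rowStochastic_iff_sum.2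
    ⟨fun i j => (A i j).2, fun i => by simp [B, ← NNReal.coe_sum, hA]⟩
  have hBpow : ∀ t, B ^ t = (A ^ t).map NNReal.toRealHom := fun t => (Matrix.map_pow A _ t).symm
  have hcol : ∀ j, ∃ c : NNReal, ∀ i, Tendsto (fun t => (A ^ t) i j) atTop (nhds c) := by
    intro j
    have : Nonempty ι := ⟨j⟩
    obtain ⟨c, hc⟩ := exists_tendsto_pow_mulVec_const hB hK
      (fun i j => by simpa [hBpow] using hpos i j) (Pi.single j 1)
    have hci : ∀ i, Tendsto (fun t => ((A ^ t) i j : ℝ)) atTop (nhds c) := fun i => by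
      simpa [hBpow] using tendsto_pi_nhds.1 hc i
    obtain ⟨hc₀, -⟩ := NNReal.tendsto_coe'.1 (hci j)
    exact ⟨⟨c, hc₀⟩, fun i => NNReal.tendsto_coe.1 (hci i)⟩
  choose c hc using hcol
  exact ⟨fun _ j => c j, tendsto_pi_nhds.2 fun i => tendsto_pi_nhds.2 fun j => hc j i,
    fun _ _ _ => rfl⟩

end Matrix

theorem constraint_consensus_general {n : ℕ} {D : Type*}
    (Md : D → Matrix (Fin n) (Fin n) NNReal)
    (hstoch : ∀ d i, ∑ j, Md d i j = 1)
    (hconn : ∀ d, ∀ i j : Fin n, ∃ k : ℕ, 0 < (Md d ^ k) i j)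
    (haper : ∀ d, ∀ e : ℕ,
      (∀ k : ℕ, 0 < k → (∃ i : Fin n, 0 < (Md d ^ k) i i) → e ∣ k) → e = 1) :
    ∃ L : D → Matrix (Fin n) (Fin n) NNReal,
      (∀ d, Tendsto (fun t : ℕ => Md d ^ t) atTop (nhds (L d))) ∧
      ∀ d, ∀ i i' j, L d i j = L d i' j := by
  have hconsensus : ∀ d, ∃ L : Matrix (Fin n) (Fin n) NNReal,
      Tendsto (fun t : ℕ => Md d ^ t) atTop (nhds L) ∧ ∀ i i' j, L i j = L i' j := fun d => by
    obtain ⟨K, hpos, hK⟩ :=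
      ((eventually_pow_pos (hconn d) (haper d)).and (eventually_gt_atTop 0)).exists
    exact exists_tendsto_pow_of_pow_pos (hstoch d) hK hpos
  choose L hL hrows using hconsensus
  exact ⟨L, hL, hrows⟩

/-- A constraint opinion model over `ℝ≥0` with one variable `p` of finite domain `D`:
the influence matrix `M` has (possibly non-constant) constraints `D → ℝ≥0` as entries.
If for every `d ∈ D` the real matrix `M{p↦d}` is row stochastic, strongly connected
and aperiodic, then `lim_{t→∞} M^t` exists (pointwise at every `d`) and all its
rows are equal. -/
theorem constraint_consensus {n : ℕ} {D : Type*} [Fintype D]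
    (M : Fin n → Fin n → (D → NNReal))
    (Md : D → Matrix (Fin n) (Fin n) NNReal)
    (hMd : ∀ d i j, Md d i j = M i j d)
    (hstoch : ∀ d i, ∑ j, Md d i j = 1)
    (hconn : ∀ d, ∀ i j : Fin n, ∃ k : ℕ, 0 < (Md d ^ k) i j)
    (haper : ∀ d, ∀ e : ℕ,
      (∀ k : ℕ, 0 < k → (∃ i : Fin n, 0 < (Md d ^ k) i i) → e ∣ k) → e = 1) :
    ∃ L : D → Matrix (Fin n) (Fin n) NNReal,
      (∀ d, Tendsto (fun t : ℕ => Md d ^ t) atTop (nhds (L d))) ∧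
      ∀ d, ∀ i i' j, L d i j = L d i' j :=
  constraint_consensus_general Md hstoch hconn haper
end
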